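/- The group of continuous automorphisms of H₃(ℝ) is isomorphic, as a group, to the semidirect product ℝ² ⋊ GL₂(ℝ), where A ∈ GL₂(ℝ) acts on ℝ² by v ↦ (det A)·(Aᵀ)⁻¹v. -/

import Mathlib

open MeasureTheory

/-- The real Heisenberg group `H₃(ℝ)`: `ℝ³` with
`(a,b,c)·(a′,b′,c′) = (a+a′, b+b′, c+c′+a·b′)`. -/
@[ext] structure H3 : Type where
  x : ℝ
  y : ℝ
  z : ℝ

namespace H3

instance : Mul H3 := ⟨fun g h => ⟨g.x + h.x, g.y + h.y, g.z + h.z + g.x * h.y⟩⟩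
instance : One H3 := ⟨⟨0, 0, 0⟩⟩
instance : Inv H3 := ⟨fun g => ⟨-g.x, -g.y, -g.z + g.x * g.y⟩⟩

@[simp] lemma mul_x (g h : H3) : (g * h).x = g.x + h.x := rfl
@[simp] lemma mul_y (g h : H3) : (g * h).y = g.y + h.y := rfl
@[simp] lemma mul_z (g h : H3) : (g * h).z = g.z + h.z + g.x * h.y := rfl
@[simp] lemma one_x : (1 : H3).x = 0 := rfl
@[simp] lemma one_y : (1 : H3).y = 0 := rfl
@[simp] lemma one_z : (1 : H3).z = 0 := rfl
@[simp] lemma inv_x (g : H3) : g⁻¹.x = -g.x := rfl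
@[simp] lemma inv_y (g : H3) : g⁻¹.y = -g.y := rfl
@[simp] lemma inv_z (g : H3) : g⁻¹.z = -g.z + g.x * g.y := rfl

instance : Group H3 where
  mul_assoc a b c := by ext <;> simp <;> ring
  one_mul a := by ext <;> simp
  mul_one a := by ext <;> simp
  inv_mul_cancel a := by ext <;> simp

/-- The Euclidean topology on `H₃(ℝ)`. -/
instance : TopologicalSpace H3 :=
  TopologicalSpace.induced (fun g => (g.x, g.y, g.z)) inferInstance

instance : MeasurableSpace H3 := borel H3

/-- `a(t)`. -/
def Ha (t : ℝ) : H3 := ⟨t, 0, 0⟩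
/-- `b(t)`. -/
def Hb (t : ℝ) : H3 := ⟨0, t, 0⟩
/-- `c(t)`, the center. -/
def Hc (t : ℝ) : H3 := ⟨0, 0, t⟩

/-- The projection `p : H₃(ℝ) → ℝ²`. -/
def pmap (g : H3) : ℝ × ℝ := (g.x, g.y)

/-- The kernel of `p`, i.e. the center of `H₃(ℝ)`, as a subgroup. -/
def pKer : Subgroup H3 where
  carrier := {g | g.x = 0 ∧ g.y = 0}
  one_mem' := ⟨rfl, rfl⟩
  mul_mem' := by
    rintro a b ⟨ha1, ha2⟩ ⟨hb1, hb2⟩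
    exact ⟨by simp [ha1, hb1], by simp [ha2, hb2]⟩
  inv_mem' := by
    rintro a ⟨ha1, ha2⟩
    exact ⟨by simp [ha1], by simp [ha2]⟩

/-- A lattice in `H₃(ℝ)`: a discrete subgroup with compact quotient. -/
def IsLattice (Γ : Subgroup H3) : Prop :=
  DiscreteTopology Γ ∧ CompactSpace (H3 ⧸ Γ)

/-- `k_Γ`: the index of the commutator subgroup `[Γ,Γ]` in `Γ ∩ ker p`. -/
noncomputable def kIdx (Γ : Subgroup H3) : ℕ :=
  Subgroup.relIndex ⁅Γ, Γ⁆ (Γ ⊓ pKer)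

/-- The integer lattice `ℤ² ⊆ ℝ²`. -/
def intLattice : Set (ℝ × ℝ) := {v | ∃ m n : ℤ, v = ((m : ℝ), (n : ℝ))}

/-- The action of a `2×2` matrix on `ℝ²`. -/
def matVec (A : Matrix (Fin 2) (Fin 2) ℝ) (v : ℝ × ℝ) : ℝ × ℝ :=
  (A 0 0 * v.1 + A 0 1 * v.2, A 1 0 * v.1 + A 1 1 * v.2)

/-- The dual of a subset of `ℝ²`:
all vectors pairing integrally with every element of `S`. -/
def dualSet (S : Set (ℝ × ℝ)) : Set (ℝ × ℝ) :=
  {v | ∀ w ∈ S, ∃ n : ℤ, v.1 * w.1 + v.2 * w.2 = (n : ℝ)}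

end H3

open H3 Matrix

/-- The action of `GL₂(ℝ)` on `ℝ²` given by `A · v = (det A) • (Aᵀ)⁻¹ v`. -/
noncomputable def glAct (A : GL (Fin 2) ℝ) (v : Fin 2 → ℝ) : Fin 2 → ℝ :=
  (A : Matrix (Fin 2) (Fin 2) ℝ).det • (((A : Matrix (Fin 2) (Fin 2) ℝ)ᵀ)⁻¹).mulVec v

noncomputable section Aux

namespace H3Aux

open H3

/-! Topological helpers -/

@[continuity, fun_prop]
lemma continuous_x : Continuous H3.x :=
  (continuous_induced_dom (f := fun g : H3 => (g.x, g.y, g.z))).fst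

@[continuity, fun_prop]
lemma continuous_y : Continuous H3.y :=
  (continuous_induced_dom (f := fun g : H3 => (g.x, g.y, g.z))).snd.fst

@[continuity, fun_prop]
lemma continuous_z : Continuous H3.z :=
  (continuous_induced_dom (f := fun g : H3 => (g.x, g.y, g.z))).snd.snd

lemma continuous_mk3 {α : Type*} [TopologicalSpace α] {fx fy fz : α → ℝ}
    (hx : Continuous fx) (hy : Continuous fy) (hz : Continuous fz) :
    Continuous (fun a => (⟨fx a, fy a, fz a⟩ : H3)) :=
  continuous_induced_rng.2 (hx.prodMk (hy.prodMk hz))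

lemma continuous_Ha : Continuous Ha := continuous_mk3 continuous_id continuous_const continuous_const
lemma continuous_Hb : Continuous Hb := continuous_mk3 continuous_const continuous_id continuous_const
lemma continuous_Hc : Continuous Hc := continuous_mk3 continuous_const continuous_const continuous_id

/-- A continuous additive map `ℝ → ℝ` is linear. -/
lemma lin_of_add {φ : ℝ → ℝ} (hc : Continuous φ)
    (ha : ∀ s t, φ (s + t) = φ s + φ t) (t : ℝ) : φ t = φ 1 * t := by
  let F : ℝ →+ ℝ := AddMonoidHom.mk' φ ha
  have h := (F.toRealLinearMap hc).map_smul t 1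
  change φ (t • 1) = t • φ 1 at h
  simpa [F, smul_eq_mul, mul_comm] using h

/-! Algebraic helpers -/

lemma Ha_add (s t : ℝ) : Ha (s + t) = Ha s * Ha t := by ext <;> simp [Ha]
lemma Hb_add (s t : ℝ) : Hb (s + t) = Hb s * Hb t := by ext <;> simp [Hb]
lemma Hc_add (s t : ℝ) : Hc (s + t) = Hc s * Hc t := by ext <;> simp [Hc, add_comm]

lemma decomp (g : H3) : g = Hc g.z * Hb g.y * Ha g.x := by
  ext <;> simp [Ha, Hb, Hc]

lemma Hc_comm (t : ℝ) (g : H3) : Hc t * g = g * Hc t := by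
  ext <;> simp [Hc, add_comm]

lemma comm_rel : Hc 1 = (Hb 1 * Ha 1)⁻¹ * (Ha 1 * Hb 1) := by
  ext <;> simp [Ha, Hb, Hc]

/-! The explicit automorphisms -/

/-- The underlying map of the automorphism attached to `(v, M)`. -/
def φmap (v : Fin 2 → ℝ) (M : Matrix (Fin 2) (Fin 2) ℝ) (g : H3) : H3 :=
  ⟨M 0 0 * g.x + M 0 1 * g.y,
   M 1 0 * g.x + M 1 1 * g.y,
   (M 0 0 * M 1 1 - M 0 1 * M 1 0) * g.z
     + M 0 0 * M 1 0 / 2 * g.x ^ 2 + M 0 1 * M 1 0 * g.x * g.y + M 0 1 * M 1 1 / 2 * g.y ^ 2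
     + (M 0 0 * v 0 + M 1 0 * v 1) * g.x + (M 0 1 * v 0 + M 1 1 * v 1) * g.y⟩

/-- Explicit polynomial form of the action `glAct`. -/
def gact (M : Matrix (Fin 2) (Fin 2) ℝ) (w : Fin 2 → ℝ) : Fin 2 → ℝ :=
  ![M 1 1 * w 0 - M 1 0 * w 1, -(M 0 1) * w 0 + M 0 0 * w 1]

lemma det_ne (A : GL (Fin 2) ℝ) : (A : Matrix (Fin 2) (Fin 2) ℝ).det ≠ 0 := by
  have h : (A : Matrix (Fin 2) (Fin 2) ℝ).det * ((A⁻¹ : GL (Fin 2) ℝ) : Matrix (Fin 2) (Fin 2) ℝ).det = 1 := by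
    rw [← Matrix.det_mul, ← Matrix.GeneralLinearGroup.coe_mul, mul_inv_cancel,
      Matrix.GeneralLinearGroup.coe_one, Matrix.det_one]
  exact left_ne_zero_of_mul_eq_one h

lemma glAct_eq (A : GL (Fin 2) ℝ) (w : Fin 2 → ℝ) :
    glAct A w = gact (A : Matrix (Fin 2) (Fin 2) ℝ) w := by
  set M : Matrix (Fin 2) (Fin 2) ℝ := (A : Matrix (Fin 2) (Fin 2) ℝ) with hM
  have hd : M.det ≠ 0 := det_ne A
  have hinv : (Mᵀ)⁻¹ = (M.det)⁻¹ • (Mᵀ).adjugate := by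
    rw [Matrix.inv_def, Ring.inverse_eq_inv, Matrix.det_transpose]
  funext i
  fin_cases i <;>
    simp [glAct, gact, ← hM, hinv, Matrix.adjugate_fin_two, Matrix.mulVec, dotProduct,
      Fin.sum_univ_two, Matrix.transpose_apply, Matrix.smul_apply, smul_eq_mul] <;>
    field_simp <;> ring

lemma φmap_mul (v : Fin 2 → ℝ) (M : Matrix (Fin 2) (Fin 2) ℝ) (g h : H3) :
    φmap v M (g * h) = φmap v M g * φmap v M h := by
  ext <;> simp [φmap] <;> ring

lemma φmap_comp (v w : Fin 2 → ℝ) (M N : Matrix (Fin 2) (Fin 2) ℝ) (g : H3) :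
    φmap v M (φmap w N g) = φmap (v + gact M w) (M * N) g := by
  ext <;>
    simp [φmap, gact, Matrix.mul_apply, Fin.sum_univ_two] <;> ring

lemma φmap_zero_one (g : H3) : φmap 0 1 g = g := by
  ext <;> simp [φmap, Matrix.one_apply]

lemma gact_one (w : Fin 2 → ℝ) : gact 1 w = w := by
  funext i; fin_cases i <;> simp [gact, Matrix.one_apply]

lemma gact_neg (M : Matrix (Fin 2) (Fin 2) ℝ) (w : Fin 2 → ℝ) :
    gact M (-w) = -(gact M w) := by
  funext i; fin_cases i <;> simp [gact] <;> ring

lemma gact_comp (M N : Matrix (Fin 2) (Fin 2) ℝ) (w : Fin 2 → ℝ) :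
    gact M (gact N w) = gact (M * N) w := by
  funext i; fin_cases i <;>
    simp [gact, Matrix.mul_apply, Fin.sum_univ_two] <;> ring

/-- The automorphism of `H3` attached to `(v, A)`. -/
noncomputable def mkAut (v : Fin 2 → ℝ) (A : GL (Fin 2) ℝ) : MulAut H3 where
  toFun := φmap v (A : Matrix (Fin 2) (Fin 2) ℝ)
  invFun := φmap (-(gact ((A⁻¹ : GL (Fin 2) ℝ) : Matrix (Fin 2) (Fin 2) ℝ) v))
      ((A⁻¹ : GL (Fin 2) ℝ) : Matrix (Fin 2) (Fin 2) ℝ)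
  left_inv g := by
    rw [φmap_comp]
    rw [neg_add_cancel, ← Matrix.GeneralLinearGroup.coe_mul, inv_mul_cancel,
      Matrix.GeneralLinearGroup.coe_one, φmap_zero_one]
  right_inv g := by
    rw [φmap_comp, gact_neg, gact_comp, ← Matrix.GeneralLinearGroup.coe_mul, mul_inv_cancel,
      Matrix.GeneralLinearGroup.coe_one, gact_one, add_neg_cancel, φmap_zero_one]
  map_mul' := φmap_mul v _

lemma mkAut_coe (v : Fin 2 → ℝ) (A : GL (Fin 2) ℝ) :
    ⇑(mkAut v A) = φmap v (A : Matrix (Fin 2) (Fin 2) ℝ) := rfl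

lemma mkAut_symm_coe (v : Fin 2 → ℝ) (A : GL (Fin 2) ℝ) :
    ⇑(mkAut v A).symm = φmap (-(gact ((A⁻¹ : GL (Fin 2) ℝ) : Matrix (Fin 2) (Fin 2) ℝ) v))
      ((A⁻¹ : GL (Fin 2) ℝ) : Matrix (Fin 2) (Fin 2) ℝ) := rfl

lemma φmap_continuous (v : Fin 2 → ℝ) (M : Matrix (Fin 2) (Fin 2) ℝ) :
    Continuous (φmap v M) := by
  apply continuous_mk3 <;> fun_prop

end H3Aux

end Aux

/-- Corollary 1.2: the group of continuous automorphisms of `H₃(ℝ)` is isomorphic to the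
semidirect product `ℝ² ⋊ GL₂(ℝ)` (with `GL₂(ℝ)` acting via `v ↦ (det A)(Aᵀ)⁻¹v`), i.e.
there is a multiplication-preserving bijection from `ℝ² × GL₂(ℝ)` (with the semidirect
product law) onto the continuous automorphisms. -/
theorem aut_iso_semidirect :
    ∃ e : ((Fin 2 → ℝ) × GL (Fin 2) ℝ) ≃
        {f : MulAut H3 // Continuous ⇑f ∧ Continuous ⇑f.symm},
      ∀ (v w : Fin 2 → ℝ) (A B : GL (Fin 2) ℝ),
        ((e (v + glAct A w, A * B) : MulAut H3)) =
          (e (v, A) : MulAut H3) * (e (w, B) : MulAut H3) := by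
  classical
  set F : ((Fin 2 → ℝ) × GL (Fin 2) ℝ) →
      {f : MulAut H3 // Continuous ⇑f ∧ Continuous ⇑f.symm} :=
    fun p => ⟨H3Aux.mkAut p.1 p.2,
      by rw [H3Aux.mkAut_coe]; exact H3Aux.φmap_continuous _ _,
      by rw [H3Aux.mkAut_symm_coe]; exact H3Aux.φmap_continuous _ _⟩
    with hF
  have hinj : Function.Injective F := by
    rintro ⟨v, A⟩ ⟨w, B⟩ h
    have h' : ∀ g, H3Aux.φmap v (A : Matrix (Fin 2) (Fin 2) ℝ) g
        = H3Aux.φmap w (B : Matrix (Fin 2) (Fin 2) ℝ) g := by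
      intro g
      have h2 : H3Aux.mkAut v A = H3Aux.mkAut w B := congrArg Subtype.val h
      have h3 := congrArg (fun e : MulAut H3 => e g) h2
      simpa only [H3Aux.mkAut_coe] using h3
    have hx1 := congrArg H3.x (h' ⟨1, 0, 0⟩)
    have hy1 := congrArg H3.y (h' ⟨1, 0, 0⟩)
    have hx2 := congrArg H3.x (h' ⟨0, 1, 0⟩)
    have hy2 := congrArg H3.y (h' ⟨0, 1, 0⟩)
    simp only [H3Aux.φmap, mul_one, mul_zero, add_zero, zero_add] at hx1 hy1 hx2 hy2
    have hAB : A = B := by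
      refine Matrix.GeneralLinearGroup.ext fun i j => ?_
      fin_cases i <;> fin_cases j <;> assumption
    subst hAB
    have hdet : (A : Matrix (Fin 2) (Fin 2) ℝ) 0 0 * (A : Matrix (Fin 2) (Fin 2) ℝ) 1 1
        - (A : Matrix (Fin 2) (Fin 2) ℝ) 0 1 * (A : Matrix (Fin 2) (Fin 2) ℝ) 1 0 ≠ 0 := by
      have := H3Aux.det_ne A
      rwa [Matrix.det_fin_two] at this
    have hz1 := congrArg H3.z (h' ⟨1, 0, 0⟩)
    have hz2 := congrArg H3.z (h' ⟨0, 1, 0⟩)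
    simp only [H3Aux.φmap, mul_one, mul_zero, add_zero, zero_add, one_pow, zero_pow,
      mul_zero, ne_eq, OfNat.ofNat_ne_zero, not_false_iff] at hz1 hz2
    have hv0 : v 0 = w 0 := by
      refine mul_left_cancel₀ hdet ?_
      linear_combination (A : Matrix (Fin 2) (Fin 2) ℝ) 1 1 * hz1
        - (A : Matrix (Fin 2) (Fin 2) ℝ) 1 0 * hz2
    have hv1 : v 1 = w 1 := by
      refine mul_left_cancel₀ hdet ?_
      linear_combination (A : Matrix (Fin 2) (Fin 2) ℝ) 0 0 * hz2
        - (A : Matrix (Fin 2) (Fin 2) ℝ) 0 1 * hz1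
    have hveq : v = w := by
      funext i
      fin_cases i
      · exact hv0
      · exact hv1
    rw [hveq]
  have hsurj : Function.Surjective F := by
    rintro ⟨f, hf, hf'⟩
    set aa := (f (Ha 1)).x with haa
    set cc := (f (Ha 1)).y with hcc
    set bb := (f (Hb 1)).x with hbb
    set dd := (f (Hb 1)).y with hdd
    set p := (f (Ha 1)).z with hp
    set q := (f (Hb 1)).z with hq
    set D := (f (Hc 1)).z with hDdef
    -- the components of f on the one-parameter subgroups
    have hax : ∀ t, (f (Ha t)).x = aa * t := fun t =>
      H3Aux.lin_of_add (φ := fun t => (f (Ha t)).x)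
        (H3Aux.continuous_x.comp (hf.comp H3Aux.continuous_Ha))
        (fun s t => by show (f (Ha (s+t))).x = (f (Ha s)).x + (f (Ha t)).x; rw [H3Aux.Ha_add, _root_.map_mul, mul_x]) t
    have hay : ∀ t, (f (Ha t)).y = cc * t := fun t =>
      H3Aux.lin_of_add (φ := fun t => (f (Ha t)).y)
        (H3Aux.continuous_y.comp (hf.comp H3Aux.continuous_Ha))
        (fun s t => by show (f (Ha (s+t))).y = (f (Ha s)).y + (f (Ha t)).y; rw [H3Aux.Ha_add, _root_.map_mul, mul_y]) t
    have hbx : ∀ t, (f (Hb t)).x = bb * t := fun t =>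
      H3Aux.lin_of_add (φ := fun t => (f (Hb t)).x)
        (H3Aux.continuous_x.comp (hf.comp H3Aux.continuous_Hb))
        (fun s t => by show (f (Hb (s+t))).x = (f (Hb s)).x + (f (Hb t)).x; rw [H3Aux.Hb_add, _root_.map_mul, mul_x]) t
    have hby : ∀ t, (f (Hb t)).y = dd * t := fun t =>
      H3Aux.lin_of_add (φ := fun t => (f (Hb t)).y)
        (H3Aux.continuous_y.comp (hf.comp H3Aux.continuous_Hb))
        (fun s t => by show (f (Hb (s+t))).y = (f (Hb s)).y + (f (Hb t)).y; rw [H3Aux.Hb_add, _root_.map_mul, mul_y]) t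
    -- the center is preserved
    have hcen : ∀ t, (f (Hc t)).x = 0 ∧ (f (Hc t)).y = 0 := by
      intro t
      have hcomm : ∀ h : H3, f (Hc t) * h = h * f (Hc t) := by
        intro h
        calc f (Hc t) * h = f (Hc t * f.symm h) := by rw [_root_.map_mul, MulEquiv.apply_symm_apply]
          _ = f (f.symm h * Hc t) := by rw [H3Aux.Hc_comm]
          _ = h * f (Hc t) := by rw [_root_.map_mul, MulEquiv.apply_symm_apply]
      constructor
      · have h1 := congrArg H3.z (hcomm (Hb 1))
        simp [Hb] at h1
        linarith
      · have h2 := congrArg H3.z ((hcomm (Ha 1)).symm)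
        simp [Ha] at h2
        linarith
    have hcz : ∀ t, (f (Hc t)).z = D * t := fun t =>
      H3Aux.lin_of_add (φ := fun t => (f (Hc t)).z)
        (H3Aux.continuous_z.comp (hf.comp H3Aux.continuous_Hc))
        (fun s t => by show (f (Hc (s+t))).z = (f (Hc s)).z + (f (Hc t)).z; rw [H3Aux.Hc_add, _root_.map_mul, mul_z, (hcen s).1, zero_mul, add_zero]) t
    -- z-components on the a- and b-subgroups
    have haz : ∀ t, (f (Ha t)).z = aa * cc / 2 * t ^ 2 + (p - aa * cc / 2) * t := by
      intro t
      have hηadd : ∀ s t, ((f (Ha (s + t))).z - aa * cc / 2 * (s + t) ^ 2)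
          = ((f (Ha s)).z - aa * cc / 2 * s ^ 2) + ((f (Ha t)).z - aa * cc / 2 * t ^ 2) := by
        intro s t
        have hmul : (f (Ha (s + t))).z = (f (Ha s)).z + (f (Ha t)).z + aa * s * (cc * t) := by
          rw [H3Aux.Ha_add, _root_.map_mul, mul_z, hax, hay]
        rw [hmul]; ring
      have hηc : Continuous fun t : ℝ => (f (Ha t)).z - aa * cc / 2 * t ^ 2 :=
        (H3Aux.continuous_z.comp (hf.comp H3Aux.continuous_Ha)).sub (by fun_prop)
      have h := H3Aux.lin_of_add (φ := fun t : ℝ => (f (Ha t)).z - aa * cc / 2 * t ^ 2)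
        hηc hηadd t
      linear_combination h
    have hbz : ∀ t, (f (Hb t)).z = bb * dd / 2 * t ^ 2 + (q - bb * dd / 2) * t := by
      intro t
      have hηadd : ∀ s t, ((f (Hb (s + t))).z - bb * dd / 2 * (s + t) ^ 2)
          = ((f (Hb s)).z - bb * dd / 2 * s ^ 2) + ((f (Hb t)).z - bb * dd / 2 * t ^ 2) := by
        intro s t
        have hmul : (f (Hb (s + t))).z = (f (Hb s)).z + (f (Hb t)).z + bb * s * (dd * t) := by
          rw [H3Aux.Hb_add, _root_.map_mul, mul_z, hbx, hby]
        rw [hmul]; ring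
      have hηc : Continuous fun t : ℝ => (f (Hb t)).z - bb * dd / 2 * t ^ 2 :=
        (H3Aux.continuous_z.comp (hf.comp H3Aux.continuous_Hb)).sub (by fun_prop)
      have h := H3Aux.lin_of_add (φ := fun t : ℝ => (f (Hb t)).z - bb * dd / 2 * t ^ 2)
        hηc hηadd t
      linear_combination h
    -- the general formula for f
    have hformula : ∀ g : H3, f g =
        ⟨aa * g.x + bb * g.y, cc * g.x + dd * g.y,
          D * g.z + aa * cc / 2 * g.x ^ 2 + bb * cc * g.x * g.y + bb * dd / 2 * g.y ^ 2
            + (p - aa * cc / 2) * g.x + (q - bb * dd / 2) * g.y⟩ := by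
      intro g
      conv_lhs => rw [H3Aux.decomp g, _root_.map_mul, _root_.map_mul]
      ext
      · simp only [mul_x, (hcen g.z).1, hbx, hax]; ring
      · simp only [mul_y, (hcen g.z).2, hby, hay]; ring
      · simp only [mul_z, mul_x, mul_y, (hcen g.z).1, (hcen g.z).2, hcz, hbx, hby, hbz,
          hax, hay, haz]
        ring
    -- the determinant identity
    have hD : D = aa * dd - bb * cc := by
      have h0 := congrArg f H3Aux.comm_rel
      rw [_root_.map_mul, _root_.map_inv, _root_.map_mul, _root_.map_mul] at h0
      have h := congrArg H3.z h0
      simp only [mul_z, mul_x, mul_y, inv_z, inv_x, inv_y] at h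
      rw [← haa, ← hbb, ← hcc, ← hdd, ← hp, ← hq, ← hDdef] at h
      linear_combination h
    have hDne : D ≠ 0 := by
      intro h0
      have h1 : f (Hc 1) = f 1 := by
        ext
        · rw [(hcen 1).1]; simp
        · rw [(hcen 1).2]; simp
        · rw [hcz 1, _root_.map_one]; simp [h0]
      have h2 := f.injective h1
      have h3 := congrArg H3.z h2
      simp [Hc] at h3
    have hdet : aa * dd - bb * cc ≠ 0 := hD ▸ hDne
    -- assemble the pair
    refine ⟨(![(dd * (p - aa * cc / 2) - cc * (q - bb * dd / 2)) / (aa * dd - bb * cc),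
        (-(bb * (p - aa * cc / 2)) + aa * (q - bb * dd / 2)) / (aa * dd - bb * cc)],
        Matrix.GeneralLinearGroup.mkOfDetNeZero !![aa, bb; cc, dd]
          (by rw [Matrix.det_fin_two_of]; exact hdet)), ?_⟩
    apply Subtype.ext
    show (H3Aux.mkAut _ _ : MulAut H3) = f
    refine MulEquiv.ext fun g => ?_
    rw [H3Aux.mkAut_coe]
    rw [hformula g]
    have hAcoe : ((Matrix.GeneralLinearGroup.mkOfDetNeZero !![aa, bb; cc, dd]
        (by rw [Matrix.det_fin_two_of]; exact hdet) : GL (Fin 2) ℝ) :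
          Matrix (Fin 2) (Fin 2) ℝ) = !![aa, bb; cc, dd] := rfl
    ext
    · simp [H3Aux.φmap, hAcoe]
    · simp [H3Aux.φmap, hAcoe]
    · simp only [H3Aux.φmap, hAcoe, Matrix.cons_val', Matrix.cons_val_zero, Matrix.cons_val_one,
        Matrix.head_cons, Matrix.head_fin_const, Matrix.empty_val', Matrix.cons_val_fin_one, Matrix.of_apply]
      rw [hD]
      field_simp
      ring
  refine ⟨Equiv.ofBijective F ⟨hinj, hsurj⟩, ?_⟩
  intro v w A B
  show (H3Aux.mkAut (v + glAct A w) (A * B) : MulAut H3) = H3Aux.mkAut v A * H3Aux.mkAut w B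
  refine MulEquiv.ext fun g => ?_
  show H3Aux.φmap (v + glAct A w) _ g = H3Aux.φmap v _ (H3Aux.φmap w _ g)
  rw [H3Aux.φmap_comp, H3Aux.glAct_eq, Matrix.GeneralLinearGroup.coe_mul]
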